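/- Let P ≪ Q be probability measures and (G_n) an increasing sequence of sub-σ-fields generating G_∞. Then D(P|_{G_n}‖Q|_{G_n}) increases to D(P|_{G_∞}‖Q|_{G_∞}) as n → ∞. -/

import Mathlib

open MeasureTheory Filter Topology
open scoped ENNReal

/-- Kullback–Leibler divergence `D(P‖Q) = ∫ log (dP/dQ) dP`, with value `∞` when `P` is not
absolutely continuous w.r.t. `Q` or the integral does not exist. -/
noncomputable def klDiv {α : Type*} [MeasurableSpace α] (P Q : Measure α) : ℝ≥0∞ :=
  open scoped Classical in
  if P ≪ Q ∧ Integrable (fun x => Real.log (P.rnDeriv Q x).toReal) P then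
    ENNReal.ofReal (∫ x, Real.log (P.rnDeriv Q x).toReal ∂P)
  else ⊤

/-! The data processing inequality makes `D(P|_G‖Q|_G)` monotone in `G`. Conversely, writing
`D(P|_G‖Q|_G) = ∫ klFun (E_Q[dP/dQ | G]) dQ` with `klFun x = x log x + 1 - x ≥ 0`, Lévy's upward
theorem makes the integrands along `G_n` converge a.e. to the one for `G_∞`, and Fatou's lemma
bounds `D(P|_{G_∞}‖Q|_{G_∞})` by the limit of the increasing sequence. -/

/-- Mathlib's `InformationTheory.klDiv` carries the correction term `ν.real univ - μ.real univ`. -/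
lemma klDiv_eq_klDiv_of_measure_univ_eq {α : Type*} [MeasurableSpace α] {μ ν : Measure α}
    (h : μ Set.univ = ν Set.univ) : klDiv μ ν = InformationTheory.klDiv μ ν := by
  have h_real : ν.real Set.univ - μ.real Set.univ = 0 := by simp [measureReal_def, h]
  classical
  rw [klDiv, InformationTheory.klDiv_def]
  simp only [add_sub_assoc, h_real, add_zero]
  rfl

namespace InformationTheory

variable {Ω : Type*} {m m0 : MeasurableSpace Ω} {μ ν : Measure Ω}
  [IsFiniteMeasure μ] [IsFiniteMeasure ν]

lemma klDiv_trim_mono {m₁ m₂ : MeasurableSpace Ω} (h : m₁ ≤ m₂) (hm₂ : m₂ ≤ m0) :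
    klDiv (μ.trim (h.trans hm₂)) (ν.trim (h.trans hm₂)) ≤ klDiv (μ.trim hm₂) (ν.trim hm₂) := by
  simpa only [trim_trim] using klDiv_trim_le (μ.trim hm₂) (ν.trim hm₂) h

lemma klDiv_trim_eq_lintegral_klFun_condExp (hm : m ≤ m0) (hμν : μ ≪ ν) :
    klDiv (μ.trim hm) (ν.trim hm) =
      ∫⁻ x, ENNReal.ofReal (klFun ((ν[fun x ↦ (μ.rnDeriv ν x).toReal | m]) x)) ∂ν := by
  have h_meas : Measurable[m] fun x ↦
      ENNReal.ofReal (klFun ((ν[fun x ↦ (μ.rnDeriv ν x).toReal | m]) x)) :=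
    (measurable_klFun.comp stronglyMeasurable_condExp.measurable).ennreal_ofReal
  rw [klDiv_eq_lintegral_klFun_of_ac (hμν.trim hm), ← lintegral_trim hm h_meas]
  refine lintegral_congr_ae ?_
  filter_upwards [toReal_rnDeriv_trim hm hμν] with x hx
  rw [hx]

lemma klDiv_trim_iSup_le_liminf (ℱ : Filtration ℕ m0) (hμν : μ ≪ ν) :
    klDiv (μ.trim (iSup_le ℱ.le)) (ν.trim (iSup_le ℱ.le)) ≤
      liminf (fun n ↦ klDiv (μ.trim (ℱ.le n)) (ν.trim (ℱ.le n))) atTop := by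
  simp only [klDiv_trim_eq_lintegral_klFun_condExp _ hμν]
  refine (lintegral_congr_ae ?_).trans_le (lintegral_liminf_le fun n ↦ ?_)
  · filter_upwards [tendsto_ae_condExp (μ := ν) (ℱ := ℱ) fun x ↦ (μ.rnDeriv ν x).toReal]
      with x hx
    exact (((ENNReal.continuous_ofReal.comp continuous_klFun).tendsto _).comp hx).liminf_eq.symm
  · exact (measurable_klFun.comp
      (stronglyMeasurable_condExp.mono (ℱ.le n)).measurable).ennreal_ofReal

lemma monotone_klDiv_trim (ℱ : Filtration ℕ m0) :
    Monotone fun n ↦ klDiv (μ.trim (ℱ.le n)) (ν.trim (ℱ.le n)) :=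
  fun _ n hle ↦ klDiv_trim_mono (ℱ.mono hle) (ℱ.le n)

lemma tendsto_klDiv_trim_iSup (ℱ : Filtration ℕ m0) (hμν : μ ≪ ν) :
    Tendsto (fun n ↦ klDiv (μ.trim (ℱ.le n)) (ν.trim (ℱ.le n))) atTop
      (𝓝 (klDiv (μ.trim (iSup_le ℱ.le)) (ν.trim (iSup_le ℱ.le)))) := by
  have h_tendsto := tendsto_atTop_iSup (monotone_klDiv_trim (μ := μ) (ν := ν) ℱ)
  convert h_tendsto using 2
  refine le_antisymm ?_ (iSup_le fun n ↦ klDiv_trim_mono (le_iSup ℱ n) (iSup_le ℱ.le))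
  exact (klDiv_trim_iSup_le_liminf ℱ hμν).trans_eq h_tendsto.liminf_eq

end InformationTheory

/-- For `P ≪ Q` and an increasing sequence of sub-σ-fields `(G_n)` generating
`G_∞ = ⨆ n, G n`, the relative entropies `D(P|_{G_n}‖Q|_{G_n})` increase to
`D(P|_{G_∞}‖Q|_{G_∞})`. -/
theorem klDiv_tendsto_of_monotone_sigma_fields
    {Ω : Type*} {m0 : MeasurableSpace Ω}
    (P Q : Measure Ω) [IsProbabilityMeasure P] [IsProbabilityMeasure Q]
    (hPQ : P ≪ Q)
    (G : ℕ → MeasurableSpace Ω) (hG : ∀ n, G n ≤ m0) (hmono : Monotone G) :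
    Monotone (fun n => @klDiv Ω (G n) (P.trim (hG n)) (Q.trim (hG n))) ∧
    Tendsto (fun n => @klDiv Ω (G n) (P.trim (hG n)) (Q.trim (hG n))) atTop
      (𝓝 (@klDiv Ω (⨆ n, G n) (P.trim (show (⨆ n, G n) ≤ m0 from iSup_le hG))
            (Q.trim (show (⨆ n, G n) ≤ m0 from iSup_le hG)))) := by
  have h_klDiv (m : MeasurableSpace Ω) (hm : m ≤ m0) :
      klDiv (P.trim hm) (Q.trim hm) = InformationTheory.klDiv (P.trim hm) (Q.trim hm) :=
    klDiv_eq_klDiv_of_measure_univ_eq (by simp [trim_measurableSet_eq hm MeasurableSet.univ])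
  simp only [h_klDiv]
  let ℱ : Filtration ℕ m0 := ⟨G, hmono, hG⟩
  exact ⟨InformationTheory.monotone_klDiv_trim ℱ, InformationTheory.tendsto_klDiv_trim_iSup ℱ hPQ⟩
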